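/- The language L_cc = { x : M_cc halts on input x } satisfies L_cc ∩ { u^n 0^m h : n, m ≥ 0 } = { u^n 0^m h : n ≥ 2^m − 1 }. -/

import Mathlib

inductive Alph : Type
  | u | z | h
deriving DecidableEq

/-- The regular language { u^n 0^m h : n, m ≥ 0 } (with `Alph.z` playing the role of `0`). -/
def Lu0h : Language Alph :=
  {w | ∃ n m : ℕ, w = List.replicate n Alph.u ++ List.replicate m Alph.z ++ [Alph.h]}

/-- The language L' = { u^n 0^m h : n ≥ 2^m − 1 }. -/
def Lcc' : Language Alph :=
  {w | ∃ n m : ℕ, w = List.replicate n Alph.u ++ List.replicate m Alph.z ++ [Alph.h] ∧ 2 ^ m - 1 ≤ n}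

/-- n-fold repetition of a word. -/
def listPow {α : Type*} (l : List α) (n : ℕ) : List α := (List.replicate n l).flatten

inductive Dir : Type
  | L | R
deriving DecidableEq

def Dir.move : Dir → ℤ
  | .L => -1
  | .R => 1

/-- A one-state Turing machine: a blank symbol, a set of halting symbols
(as a Boolean predicate) and a transition function on the tape alphabet. -/
structure OneStateTM (Γ : Type) where
  blank : Γ
  halt : Γ → Bool
  δ : Γ → Γ × Dir

/-- A configuration: a bi-infinite tape and a head position. -/
structure Cfg (Γ : Type) where
  tape : ℤ → Γ
  pos : ℤ

/-- One step of the machine; `none` means the machine has halted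
(the head reads a halting symbol). -/
def OneStateTM.step {Γ : Type} (M : OneStateTM Γ) (c : Cfg Γ) : Option (Cfg Γ) :=
  if M.halt (c.tape c.pos) then none
  else some ⟨Function.update c.tape c.pos (M.δ (c.tape c.pos)).1,
             c.pos + (M.δ (c.tape c.pos)).2.move⟩

/-- Initial tape: the input written in cells 0,…,len−1, blanks elsewhere. -/
def OneStateTM.initTape {Γ : Type} (M : OneStateTM Γ) (l : List Γ) : ℤ → Γ :=
  fun i => if i < 0 then M.blank else l.getD i.toNat M.blank

/-- The machine halts starting from configuration `c`. -/
def OneStateTM.HaltsFrom {Γ : Type} (M : OneStateTM Γ) (c : Cfg Γ) : Prop :=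
  ∃ n : ℕ, (fun o => Option.bind o M.step)^[n] (some c) = none

/-- The machine halts on input `l` (head initially on the leftmost input symbol). -/
def OneStateTM.HaltsOn {Γ : Type} (M : OneStateTM Γ) (l : List Γ) : Prop :=
  M.HaltsFrom ⟨M.initTape l, 0⟩

/-- The tape alphabet of M_cc: blank, u, U, h, 0, 1, Z, C, B. -/
inductive Tcc : Type
  | blank | u | bigU | h | z0 | one | Z | C | B
deriving DecidableEq

/-- The one-state Turing machine M_cc. -/
def Mcc : OneStateTM Tcc where
  blank := .blank
  halt := fun a => match a with | .h => true | _ => false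
  δ := fun a => match a with
    | .u => (.bigU, .R)
    | .z0 => (.one, .L)
    | .bigU => (.C, .R)
    | .one => (.Z, .R)
    | .Z => (.z0, .L)
    | .C => (.B, .L)
    | .B => (.C, .R)
    | .blank => (.blank, .L)
    | .h => (.h, .R)   -- irrelevant: h is halting

/-- The input u^n 0^m h. -/
def ccInput (n m : ℕ) : List Tcc :=
  List.replicate n .u ++ List.replicate m .z0 ++ [.h]

/-- Embedding of the input alphabet {u, 0, h} into the tape alphabet of M_cc. -/
def embed : Alph → Tcc
  | .u => .u
  | .z => .z0
  | .h => .h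

/-- The language recognized (by halting) by M_cc, as a language over {u, 0, h}. -/
def Lcc : Language Alph := {x | Mcc.HaltsOn (x.map embed)}

/-!
On `u^n 0^m h` the machine first turns every `u` into `U` and then uses the `m` cells after
them as a binary counter, least significant digit first. An increment turns the low-order `1`s
into `0`s (crossing them as `Z`) and the next `0` into `1`; the head then crosses the block of
`C`s leftwards (as `B`s), turns the last remaining `U` into `C` and returns to the counter.
So after `k ≤ n` rounds the tape reads `U^(n-k) C^k`, then `k` in binary, then `h`.
If `2^m - 1 ≤ n`, the counter becomes all `1`s after `2^m - 1` rounds and the next sweep runs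
through it into `h`. Otherwise the `U`s run out first: the next return crosses the `C`s to the
left end of the input, and the head walks left over blanks forever.
-/

namespace OneStateTM

open StateTransition List

variable {Γ : Type} {M : OneStateTM Γ}

theorem haltsFrom_iff_exists_reaches {c : Cfg Γ} :
    M.HaltsFrom c ↔ ∃ c', Reaches M.step c c' ∧ M.step c' = none := by
  constructor
  · rintro ⟨n, hn⟩
    induction n generalizing c with
    | zero => cases hn
    | succ n ih =>
      rw [Function.iterate_succ_apply] at hn
      rcases hstep : M.step c with _ | c'
      · exact ⟨c, .refl, hstep⟩
      · obtain ⟨d, hcd, hd⟩ := ih (by simpa [hstep] using hn)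
        exact ⟨d, .head hstep hcd, hd⟩
  · rintro ⟨c', hcc', hc'⟩
    have hiter : ∀ {d}, Reaches M.step c d →
        ∃ k, (fun o => Option.bind o M.step)^[k] (some c) = some d := by
      intro d hcd
      induction hcd with
      | refl => exact ⟨0, rfl⟩
      | tail _ hstep ih =>
        obtain ⟨k, hk⟩ := ih
        exact ⟨k + 1, by rw [Function.iterate_succ_apply', hk]; exact hstep⟩
    obtain ⟨k, hk⟩ := hiter hcc'
    exact ⟨k + 1, by rw [Function.iterate_succ_apply', hk]; exact hc'⟩

theorem haltsFrom_iff_dom_eval {c : Cfg Γ} : M.HaltsFrom c ↔ (eval M.step c).Dom := by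
  simp only [haltsFrom_iff_exists_reaches, Part.dom_iff_mem, mem_eval]

theorem haltsFrom_iff_of_reaches {c c' : Cfg Γ} (h : Reaches M.step c c') :
    M.HaltsFrom c ↔ M.HaltsFrom c' := by
  rw [haltsFrom_iff_dom_eval, haltsFrom_iff_dom_eval, reaches_eval h]

theorem not_haltsFrom_of_forall_mem {S : Set (Cfg Γ)}
    (hS : ∀ c ∈ S, ∃ c' ∈ S, M.step c = some c') {c : Cfg Γ} (hc : c ∈ S) :
    ¬ M.HaltsFrom c := by
  rw [haltsFrom_iff_exists_reaches]
  rintro ⟨d, hcd, hd⟩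
  have hdS : d ∈ S := by
    clear hd
    induction hcd with
    | refl => exact hc
    | tail _ hstep ih =>
      obtain ⟨e, heS, he⟩ := hS _ ih
      exact (Option.some_injective _ (he.symm.trans hstep)) ▸ heS
  obtain ⟨e, -, he⟩ := hS d hdS
  simp [hd] at he

theorem initTape_natCast (L : List Γ) (p : ℕ) : M.initTape L p = L.getD p M.blank := by
  simp [initTape]

theorem update_initTape (P R : List Γ) (s x : Γ) :
    Function.update (M.initTape (P ++ s :: R)) P.length x = M.initTape (P ++ x :: R) := by
  funext i
  rcases eq_or_ne i P.length with rfl | hi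
  · simp [initTape_natCast]
  · rw [Function.update_of_ne hi]
    unfold initTape
    split_ifs with hneg
    · rfl
    · have hi' : i.toNat ≠ P.length := by omega
      simp only [List.getD_eq_getElem?_getD, List.getElem?_append, List.getElem?_cons]
      split_ifs <;> first | rfl | omega

theorem step_initTape {s x : Γ} {d : Dir} (hs : M.halt s = false) (hδ : M.δ s = (x, d))
    (P R : List Γ) :
    M.step ⟨M.initTape (P ++ s :: R), P.length⟩ =
      some ⟨M.initTape (P ++ x :: R), P.length + d.move⟩ := by
  simp [step, initTape_natCast, hs, hδ, update_initTape]

theorem haltsFrom_initTape_of_halt {s : Γ} (hs : M.halt s = true) (P R : List Γ) :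
    M.HaltsFrom ⟨M.initTape (P ++ s :: R), P.length⟩ :=
  ⟨1, by simp [step, initTape_natCast, hs]⟩

theorem reaches_sweep_right {s s' : Γ} (hs : M.halt s = false) (hδ : M.δ s = (s', .R))
    (P R : List Γ) (j : ℕ) :
    Reaches M.step ⟨M.initTape (P ++ replicate j s ++ R), P.length⟩
      ⟨M.initTape (P ++ replicate j s' ++ R), P.length + j⟩ := by
  induction j generalizing P with
  | zero => simpa using .refl
  | succ j ih =>
    have hstep := step_initTape hs hδ P (replicate j s ++ R)
    refine .head (b := ⟨M.initTape (P ++ s' :: (replicate j s ++ R)), P.length + 1⟩) ?_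
      (?_ : Reaches M.step _ _)
    · simpa [replicate_succ, Dir.move] using hstep
    · convert ih (P ++ [s']) using 2 <;> simp [replicate_succ]
      ring

theorem reaches_sweep_left {s s' : Γ} (hs : M.halt s = false) (hδ : M.δ s = (s', .L))
    (P R : List Γ) (j : ℕ) :
    Reaches M.step ⟨M.initTape (P ++ replicate j s ++ R), P.length + j - 1⟩
      ⟨M.initTape (P ++ replicate j s' ++ R), P.length - 1⟩ := by
  induction j generalizing R with
  | zero => simpa using .refl
  | succ j ih =>
    have hstep := step_initTape hs hδ (P ++ replicate j s) R
    refine .head (b := ⟨M.initTape (P ++ replicate j s ++ s' :: R), P.length + j - 1⟩) ?_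
      (?_ : Reaches M.step _ _)
    · rw [show (P.length : ℤ) + (j + 1 : ℕ) - 1 = (P ++ replicate j s).length by simp; ring,
        show P ++ replicate (j + 1) s ++ R = P ++ replicate j s ++ s :: R by simp [replicate_succ']]
      simpa [Dir.move, sub_eq_add_neg] using hstep
    · convert ih (s' :: R) using 3
      simp [replicate_succ']

theorem not_haltsFrom_initTape_of_neg (hb : M.halt M.blank = false)
    (hδ : M.δ M.blank = (M.blank, .L)) (L : List Γ) {p : ℤ} (hp : p < 0) :
    ¬ M.HaltsFrom ⟨M.initTape L, p⟩ := by
  refine not_haltsFrom_of_forall_mem (S := {c | c.tape = M.initTape L ∧ c.pos < 0}) ?_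
    ⟨rfl, hp⟩
  rintro ⟨_, q⟩ ⟨rfl, hq : q < 0⟩
  have hblank : M.initTape L q = M.blank := if_pos hq
  refine ⟨⟨M.initTape L, q - 1⟩, ⟨rfl, show q - 1 < 0 by omega⟩, ?_⟩
  simp [step, hblank, hb, hδ, Dir.move, sub_eq_add_neg]

end OneStateTM

namespace Mcc

open StateTransition OneStateTM List

def counter : ℕ → ℕ → List Tcc
  | 0, _ => []
  | m + 1, k => (if k % 2 = 1 then .one else .z0) :: counter m (k / 2)

theorem counter_zero (m : ℕ) : counter m 0 = replicate m .z0 := by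
  induction m with
  | zero => rfl
  | succ m ih => simp [counter, ih, replicate_succ]

theorem counter_two_pow_sub_one (m : ℕ) : counter m (2 ^ m - 1) = replicate m .one := by
  induction m with
  | zero => rfl
  | succ m ih =>
    have hpos : 0 < 2 ^ m := Nat.two_pow_pos m
    have hmod : (2 ^ (m + 1) - 1) % 2 = 1 := by omega
    have hdiv : (2 ^ (m + 1) - 1) / 2 = 2 ^ m - 1 := by omega
    simp [counter, hmod, hdiv, ih, replicate_succ]

theorem exists_counter_succ {m k : ℕ} (hk : k + 1 < 2 ^ m) :
    ∃ t w, counter m k = replicate t .one ++ .z0 :: w ∧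
      counter m (k + 1) = replicate t .z0 ++ .one :: w := by
  induction m generalizing k with
  | zero => simp at hk
  | succ m ih =>
    rcases Nat.mod_two_eq_zero_or_one k with hk2 | hk2
    · refine ⟨0, counter m (k / 2), ?_, ?_⟩
      · simp [counter, hk2]
      · have hmod : (k + 1) % 2 = 1 := by omega
        have hdiv : (k + 1) / 2 = k / 2 := by omega
        simp [counter, hmod, hdiv]
    · obtain ⟨t, w, hw, hw'⟩ := ih (k := k / 2) (by rw [pow_succ] at hk; omega)
      refine ⟨t + 1, w, ?_, ?_⟩
      · simp [counter, hk2, hw, replicate_succ]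
      · have hmod : (k + 1) % 2 = 0 := by omega
        have hdiv : (k + 1) / 2 = k / 2 + 1 := by omega
        simp [counter, hmod, hdiv, hw', replicate_succ]

theorem reaches_increment (P R w : List Tcc) (t : ℕ) :
    Reaches Mcc.step ⟨Mcc.initTape (P ++ (replicate t .one ++ .z0 :: w) ++ R), P.length⟩
      ⟨Mcc.initTape (P ++ (replicate t .z0 ++ .one :: w) ++ R), P.length - 1⟩ := by
  have carry := reaches_sweep_right (M := Mcc) (s := .one) rfl rfl P (.z0 :: w ++ R) t
  have flip := step_initTape (M := Mcc) (s := .z0) rfl rfl (P ++ replicate t .Z) (w ++ R)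
  have back := reaches_sweep_left (M := Mcc) (s := .Z) rfl rfl P (.one :: w ++ R) t
  simp only [append_assoc, cons_append, length_append, length_replicate, Nat.cast_add] at *
  refine carry.trans (.head flip (?_ : Reaches Mcc.step _ _))
  convert back using 3
  simp [Dir.move, sub_eq_add_neg]

theorem reaches_consume_bigU (s j : ℕ) (R : List Tcc) :
    Reaches Mcc.step ⟨Mcc.initTape (replicate (s + 1) .bigU ++ replicate j .C ++ R), s + j⟩
      ⟨Mcc.initTape (replicate s .bigU ++ replicate (j + 1) .C ++ R), s + j + 1⟩ := by
  have left := reaches_sweep_left (M := Mcc) (s := .C) rfl rfl (replicate (s + 1) .bigU) R j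
  have mark := step_initTape (M := Mcc) (s := .bigU) rfl rfl (replicate s .bigU)
    (replicate j .B ++ R)
  have right := reaches_sweep_right (M := Mcc) (s := .B) rfl rfl (replicate s .bigU ++ [.C]) R j
  simp only [replicate_succ' (n := s), replicate_succ (n := j), append_assoc,
    cons_append, length_append, length_replicate, length_singleton, Nat.cast_add, Nat.cast_one,
    add_sub_cancel_right, add_right_comm (s : ℤ) 1] at *
  refine left.trans (.head mark (?_ : Reaches Mcc.step _ _))
  simpa [Dir.move] using right

theorem reaches_counter {n m k : ℕ} (hkn : k ≤ n) (hkm : k < 2 ^ m) :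
    Reaches Mcc.step ⟨Mcc.initTape (ccInput n m), 0⟩
      ⟨Mcc.initTape (replicate (n - k) .bigU ++ replicate k .C ++ counter m k ++ [.h]), n⟩ := by
  induction k with
  | zero =>
    simpa [ccInput, counter_zero] using
      reaches_sweep_right (M := Mcc) (s := .u) rfl rfl [] (replicate m .z0 ++ [.h]) n
  | succ k ih =>
    obtain ⟨t, w, hw, hw'⟩ := exists_counter_succ hkm
    have incr := reaches_increment (replicate (n - k) .bigU ++ replicate k .C) [.h] w t
    have ret := reaches_consume_bigU (n - (k + 1)) k (counter m (k + 1) ++ [.h])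
    rw [← hw, ← hw',
      show (replicate (n - k) Tcc.bigU ++ replicate k Tcc.C).length = n by simp; omega] at incr
    rw [show n - (k + 1) + 1 = n - k by omega,
      show ((n - (k + 1) : ℕ) : ℤ) + k = n - 1 by omega,
      show (n : ℤ) - 1 + 1 = n by ring] at ret
    refine (ih (by omega) (by omega)).trans (incr.trans (?_ : Reaches Mcc.step _ _))
    simpa using ret

theorem haltsOn_ccInput {n m : ℕ} (h : 2 ^ m - 1 ≤ n) : Mcc.HaltsOn (ccInput n m) := by
  have hk : 2 ^ m - 1 < 2 ^ m := Nat.sub_one_lt (Nat.two_pow_pos m).ne'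
  have count := reaches_counter h hk
  have carry := reaches_sweep_right (M := Mcc) (s := .one) rfl rfl
    (replicate (n - (2 ^ m - 1)) .bigU ++ replicate (2 ^ m - 1) .C) [.h] m
  rw [counter_two_pow_sub_one] at count
  rw [show (replicate (n - (2 ^ m - 1)) Tcc.bigU ++ replicate (2 ^ m - 1) Tcc.C).length = n by
    simp; omega] at carry
  rw [HaltsOn, haltsFrom_iff_of_reaches (count.trans carry)]
  have atH := haltsFrom_initTape_of_halt (M := Mcc) (s := .h) rfl
    (replicate (n - (2 ^ m - 1)) .bigU ++ replicate (2 ^ m - 1) .C ++ replicate m .Z) []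
  rw [show (replicate (n - (2 ^ m - 1)) Tcc.bigU ++ replicate (2 ^ m - 1) Tcc.C ++
    replicate m Tcc.Z).length = n + m by simp; omega] at atH
  simpa using atH

theorem not_haltsOn_ccInput {n m : ℕ} (h : n < 2 ^ m - 1) : ¬ Mcc.HaltsOn (ccInput n m) := by
  obtain ⟨t, w, hw, hw'⟩ := exists_counter_succ (show n + 1 < 2 ^ m by omega)
  have count := reaches_counter le_rfl (show n < 2 ^ m by omega)
  have incr := reaches_increment (replicate n .C) [.h] w t
  have fall := reaches_sweep_left (M := Mcc) (s := .C) rfl rfl [] (counter m (n + 1) ++ [.h]) n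
  rw [← hw, ← hw', length_replicate] at incr
  rw [Nat.sub_self, replicate_zero, nil_append] at count
  rw [HaltsOn, haltsFrom_iff_of_reaches
    (count.trans (incr.trans (by simpa using fall : Reaches Mcc.step _ _)))]
  exact not_haltsFrom_initTape_of_neg rfl rfl _ (by norm_num)

theorem haltsOn_ccInput_iff (n m : ℕ) : Mcc.HaltsOn (ccInput n m) ↔ 2 ^ m - 1 ≤ n :=
  ⟨fun h => by by_contra! hn; exact not_haltsOn_ccInput hn h, haltsOn_ccInput⟩

theorem replicate_append_mem_Lcc_iff (n m : ℕ) :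
    replicate n Alph.u ++ replicate m Alph.z ++ [Alph.h] ∈ Lcc ↔ 2 ^ m - 1 ≤ n := by
  rw [← haltsOn_ccInput_iff]
  show Mcc.HaltsOn _ ↔ _
  simp [ccInput, embed]

end Mcc

/-- L_cc ⊓ { u^n 0^m h } = { u^n 0^m h : n ≥ 2^m − 1 }. -/
theorem Lcc_inter_Lu0h : Lcc ⊓ Lu0h = Lcc' := by
  ext w
  constructor
  · rintro ⟨hw, n, m, rfl⟩
    exact ⟨n, m, rfl, (Mcc.replicate_append_mem_Lcc_iff n m).1 hw⟩
  · rintro ⟨n, m, rfl, hn⟩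
    exact ⟨(Mcc.replicate_append_mem_Lcc_iff n m).2 hn, n, m, rfl⟩
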